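/- Convergence of discretized rough paths under Property (RIE): suppose X satisfies Property (RIE) relative to p ∈ (2,3) and (P^n), with canonical lift 𝕏_{s,t} = ∫_s^t X_u ⊗ dX_u − X_s ⊗ X_{s,t} and discretized lifts 𝕏^n_{s,t} = ∫_s^t X^n_{s,u} ⊗ dX^n_u. Then for any p' > p, ‖X^n − X‖_{p'} + ‖𝕏^n − 𝕏‖_{p'/2} → 0 as n → ∞, with the quantitative bound ‖X^n − X‖_{p'} + ‖𝕏^n − 𝕏‖_{p'/2} ≤ C (‖X^n − X‖_∞^{1−p/p'} + sup_{(s,t)∈Δ_T} |∫_s^t X^n_{s,u} ⊗ dX_u − 𝕏_{s,t}|^{1−p/p'}), where C depends only on p, p', |X_0| and w(0,T) for the control w in condition (iii) of Property (RIE). -/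

import Mathlib

open scoped ENNReal Classical
open Filter MeasureTheory ProbabilityTheory

noncomputable section

/-- The `p`-variation of a path `X` over `[0,T]`, as an extended nonnegative real:
`(sup over partitions of Σ ‖increment‖^p)^(1/p)`. -/
def epVar {E : Type*} [NormedAddCommGroup E] (X : ℝ → E) (p T : ℝ) : ℝ≥0∞ :=
  (⨆ (n : ℕ) (t : ℕ → ℝ) (_ : Monotone t) (_ : t 0 = 0) (_ : t n = T),
    ∑ i ∈ Finset.range n, ENNReal.ofReal (‖X (t (i + 1)) - X (t i)‖ ^ p)) ^ (1 / p)

/-- The `r`-variation of a two-parameter function `A` over `[0,T]`. -/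
def epVar2 {E : Type*} [NormedAddCommGroup E] (A : ℝ → ℝ → E) (r T : ℝ) : ℝ≥0∞ :=
  (⨆ (n : ℕ) (t : ℕ → ℝ) (_ : Monotone t) (_ : t 0 = 0) (_ : t n = T),
    ∑ i ∈ Finset.range n, ENNReal.ofReal (‖A (t i) (t (i + 1))‖ ^ r)) ^ (1 / r)

/-- Piecewise constant approximation of `X` along the partition `t 0 ≤ t 1 ≤ ... ≤ t N`. -/
def pcApprox {E : Type*} (X : ℝ → E) (N : ℕ) (t : ℕ → ℝ) (s : ℝ) : E :=
  X (t (Nat.findGreatest (fun k => t k ≤ s) N))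

/-- Tensor (outer) product of two Euclidean vectors, with the Frobenius (Euclidean) norm. -/
def tp2 {d e : ℕ} (v : EuclideanSpace ℝ (Fin d)) (w : EuclideanSpace ℝ (Fin e)) :
    EuclideanSpace ℝ (Fin d × Fin e) :=
  (WithLp.equiv 2 (Fin d × Fin e → ℝ)).symm (fun q => v q.1 * w q.2)

def tp {d : ℕ} (v w : EuclideanSpace ℝ (Fin d)) : EuclideanSpace ℝ (Fin d × Fin d) :=
  tp2 v w

/-- Clamping of `x` into the interval `[s,u]`. -/
def clamp (s u x : ℝ) : ℝ := max s (min x u)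

/-- The second-level lift `𝕏ⁿ_{s,u} = ∫_s^u (Xⁿ_r − Xⁿ_s) ⊗ dXⁿ_r` of a path `Xn` which is
piecewise constant along the partition `t`, written as a left-point Riemann-Stieltjes sum. -/
def pcLift {d : ℕ} (N : ℕ) (Xn : ℝ → EuclideanSpace ℝ (Fin d)) (t : ℕ → ℝ) (s u : ℝ) :
    EuclideanSpace ℝ (Fin d × Fin d) :=
  ∑ i ∈ Finset.range N,
    tp (Xn (clamp s u (t i)) - Xn s) (Xn (clamp s u (t (i + 1))) - Xn (clamp s u (t i)))

/-- The left-point Riemann sum `∫_0^u Xⁿ_r ⊗ dX_r = Σ_k X_{t_k} ⊗ (X_{t_{k+1}∧u} − X_{t_k∧u})`. -/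
def riemannSum {d : ℕ} (N : ℕ) (X : ℝ → EuclideanSpace ℝ (Fin d)) (t : ℕ → ℝ) (u : ℝ) :
    EuclideanSpace ℝ (Fin d × Fin d) :=
  ∑ k ∈ Finset.range N, tp (X (t k)) (X (min (t (k + 1)) u) - X (min (t k) u))

/-- The left-point Riemann sum `∫_s^u Xⁿ_{s,r} ⊗ dX_r`. -/
def mixedInt {d : ℕ} (N : ℕ) (X : ℝ → EuclideanSpace ℝ (Fin d)) (t : ℕ → ℝ) (s u : ℝ) :
    EuclideanSpace ℝ (Fin d × Fin d) :=
  ∑ i ∈ Finset.range N,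
    tp (pcApprox X N t (clamp s u (t i)) - pcApprox X N t s)
      (X (clamp s u (t (i + 1))) - X (clamp s u (t i)))

/-- A control function on the simplex `Δ_T`: nonnegative and superadditive. -/
def IsControl (T : ℝ) (w : ℝ → ℝ → ℝ) : Prop :=
  (∀ s t, 0 ≤ s → s ≤ t → t ≤ T → 0 ≤ w s t) ∧
  (∀ s u t, 0 ≤ s → s ≤ u → u ≤ t → t ≤ T → w s u + w u t ≤ w s t)

/-- Property (RIE) for a path `X` relative to `p ∈ (2,3)` and a sequence of partitions
`t n 0 ≤ ... ≤ t n (N n)` of `[0,T]` with vanishing mesh. -/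
structure PropertyRIE {d : ℕ} (p T : ℝ) (X : ℝ → EuclideanSpace ℝ (Fin d))
    (N : ℕ → ℕ) (t : ℕ → ℕ → ℝ) : Prop where
  mono : ∀ n, Monotone (t n)
  zero : ∀ n, t n 0 = 0
  top : ∀ n, t n (N n) = T
  mesh : ∀ ε > 0, ∃ m, ∀ n ≥ m, ∀ i < N n, t n (i + 1) - t n i < ε
  unif : TendstoUniformlyOn (fun n s => pcApprox X (N n) (t n) s) X atTop (Set.Icc 0 T)
  riemann : ∃ I : ℝ → EuclideanSpace ℝ (Fin d × Fin d),
    TendstoUniformlyOn (fun n u => riemannSum (N n) X (t n) u) I atTop (Set.Icc 0 T)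
  control : ∃ w : ℝ → ℝ → ℝ, IsControl T w ∧
    (∀ s u, 0 ≤ s → s ≤ u → u ≤ T → ‖X u - X s‖ ^ p ≤ w s u) ∧
    (∀ n, ∀ k ℓ : ℕ, k < ℓ → ℓ ≤ N n →
      ‖riemannSum (N n) X (t n) (t n ℓ) - riemannSum (N n) X (t n) (t n k) -
          tp (X (t n k)) (X (t n ℓ) - X (t n k))‖ ^ (p / 2) ≤ w (t n k) (t n ℓ))

/-!
Both levels are estimated by interpolating between a `p`-variation bound, uniform in `n`, and a
uniform bound that tends to zero: `‖·‖_{p'} ≤ ‖·‖_p^{p/p'} ‖·‖_∞^{1-p/p'}`.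

The variation bounds come from the control `w`. `Xⁿ` samples `X` at partition points, and
`𝕏ⁿ_{s,u}` is exactly the (RIE) increment between the partition points preceding `s` and `u`,
so both are controlled by `w(0,T)`; the bound passes to `𝕏` by lower semicontinuity, since
`𝕏ⁿ → 𝕏` pointwise.

The uniform bounds come from comparing `𝕏ⁿ` with the Riemann sums `∫_s^u Xⁿ_{s,r} ⊗ dX_r`:
the two differ only by the boundary term `(Xⁿ_s - Xⁿ_u) ⊗ (X_u - Xⁿ_u)`, of size at most
`2 ‖X‖_∞ ‖Xⁿ - X‖_∞`.
-/

open Finset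

section TensorProduct

variable {d : ℕ}

lemma tp_apply (v w : EuclideanSpace ℝ (Fin d)) (q : Fin d × Fin d) :
    tp v w q = v q.1 * w q.2 := rfl

lemma tp_sub_left (v v' w : EuclideanSpace ℝ (Fin d)) : tp (v - v') w = tp v w - tp v' w := by
  ext q; simp [tp_apply, sub_mul]

lemma tp_sub_right (v w w' : EuclideanSpace ℝ (Fin d)) : tp v (w - w') = tp v w - tp v w' := by
  ext q; simp [tp_apply, mul_sub]

@[simp]
lemma tp_zero_left (w : EuclideanSpace ℝ (Fin d)) : tp 0 w = 0 := by
  ext q; simp [tp_apply]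

@[simp]
lemma tp_zero_right (v : EuclideanSpace ℝ (Fin d)) : tp v 0 = 0 := by
  ext q; simp [tp_apply]

lemma tp_sum_right {ι : Type*} (s : Finset ι) (v : EuclideanSpace ℝ (Fin d))
    (w : ι → EuclideanSpace ℝ (Fin d)) : tp v (∑ i ∈ s, w i) = ∑ i ∈ s, tp v (w i) := by
  ext q; simp [tp_apply, Finset.mul_sum]

lemma norm_tp_le (v w : EuclideanSpace ℝ (Fin d)) : ‖tp v w‖ ≤ ‖v‖ * ‖w‖ := by
  rw [EuclideanSpace.norm_eq, EuclideanSpace.norm_eq, EuclideanSpace.norm_eq,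
    ← Real.sqrt_mul (by positivity)]
  refine Real.sqrt_le_sqrt (le_of_eq ?_)
  simp_rw [tp_apply, norm_mul, mul_pow]
  rw [Fintype.sum_prod_type, Finset.sum_mul_sum]

end TensorProduct

structure IsPartition (T : ℝ) (K : ℕ) (P : ℕ → ℝ) : Prop where
  mono : Monotone P
  zero : P 0 = 0
  last : P K = T

namespace IsPartition

variable {T : ℝ} {K : ℕ} {P : ℕ → ℝ}

lemma nonneg (hP : IsPartition T K P) (i : ℕ) : 0 ≤ P i :=
  hP.zero ▸ hP.mono (Nat.zero_le i)

lemma le_last (hP : IsPartition T K P) {i : ℕ} (hi : i ≤ K) : P i ≤ T :=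
  hP.last ▸ hP.mono hi

lemma step (hP : IsPartition T K P) {j : ℕ} (hj : j < K) :
    0 ≤ P j ∧ P j ≤ P (j + 1) ∧ P (j + 1) ≤ T :=
  ⟨hP.nonneg j, hP.mono (Nat.le_succ j), hP.le_last hj⟩

end IsPartition

def lastIdx (P : ℕ → ℝ) (K : ℕ) (s : ℝ) : ℕ := Nat.findGreatest (fun k => P k ≤ s) K

section LastIdx

variable {P : ℕ → ℝ} {K : ℕ} {s : ℝ}

lemma lastIdx_le (P : ℕ → ℝ) (K : ℕ) (s : ℝ) : lastIdx P K s ≤ K := Nat.findGreatest_le K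

lemma node_lastIdx_le (h : P 0 ≤ s) : P (lastIdx P K s) ≤ s :=
  Nat.findGreatest_spec (P := fun k => P k ≤ s) (Nat.zero_le K) h

lemma le_lastIdx {i : ℕ} (hiK : i ≤ K) (hi : P i ≤ s) : i ≤ lastIdx P K s :=
  Nat.le_findGreatest hiK hi

lemma lt_node_of_lastIdx_lt {i : ℕ} (hiK : i ≤ K) (h : lastIdx P K s < i) : s < P i :=
  not_le.mp (Nat.findGreatest_is_greatest h hiK)

lemma lastIdx_mono : Monotone (lastIdx P K) :=
  fun _ _ h => Nat.findGreatest_mono (fun _ hn => hn.trans h) le_rfl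

lemma IsPartition.node_lastIdx_mem {T : ℝ} (hP : IsPartition T K P) (s : ℝ) :
    0 ≤ P (lastIdx P K s) ∧ P (lastIdx P K s) ≤ T :=
  ⟨hP.nonneg _, hP.le_last (lastIdx_le P K s)⟩

lemma pcApprox_eq {E : Type*} (X : ℝ → E) (s : ℝ) : pcApprox X K P s = X (P (lastIdx P K s)) :=
  rfl

lemma pcApprox_node {E : Type*} (hP : Monotone P) (X : ℝ → E) {i : ℕ} (hiK : i ≤ K) :
    pcApprox X K P (P i) = X (P i) :=
  congrArg X <| le_antisymm (node_lastIdx_le (hP (Nat.zero_le i))) (hP (le_lastIdx hiK le_rfl))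

end LastIdx

section Clamp

variable {s u x : ℝ}

lemma clamp_of_le (h : x ≤ s) : clamp s u x = s :=
  max_eq_left ((min_le_left x u).trans h)

lemma clamp_of_ge (hsu : s ≤ u) (h : u ≤ x) : clamp s u x = u := by
  rw [clamp, min_eq_right h, max_eq_right hsu]

lemma clamp_of_mem (h1 : s ≤ x) (h2 : x ≤ u) : clamp s u x = x := by
  rw [clamp, min_eq_left h2, max_eq_right h1]

lemma sub_clamp_eq_sub_min {E : Type*} [AddCommGroup E] (X : ℝ → E) (hsu : s ≤ u) (x : ℝ) :
    X (clamp s u x) - X s = X (min x u) - X (min x s) := by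
  rcases le_or_gt x s with h1 | h1
  · rw [clamp_of_le h1, min_eq_left (h1.trans hsu), min_eq_left h1, sub_self, sub_self]
  rcases le_or_gt x u with h2 | h2
  · rw [clamp_of_mem h1.le h2, min_eq_left h2, min_eq_right h1.le]
  · rw [clamp_of_ge hsu h2.le, min_eq_right h2.le, min_eq_right (hsu.trans_lt h2).le]

end Clamp

section Identities

variable {d : ℕ} {K : ℕ} {P : ℕ → ℝ} {T s u : ℝ}

lemma sum_tp_clamp_eq_riemannSum_sub (X : ℝ → EuclideanSpace ℝ (Fin d)) {a b : ℝ} (hab : a ≤ b) :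
    ∑ i ∈ range K, tp (X (P i)) (X (clamp a b (P (i + 1))) - X (clamp a b (P i)))
      = riemannSum K X P b - riemannSum K X P a := by
  rw [riemannSum, riemannSum, ← sum_sub_distrib]
  refine sum_congr rfl fun i _ => ?_
  rw [← tp_sub_right]
  congr 1
  rw [← sub_sub_sub_cancel_right _ _ (X a), sub_clamp_eq_sub_min X hab,
    sub_clamp_eq_sub_min X hab]
  abel

lemma sum_tp_const_clamp (hP : IsPartition T K P) (X : ℝ → EuclideanSpace ℝ (Fin d))
    {a b : ℝ} (ha : 0 ≤ a) (hab : a ≤ b) (hbT : b ≤ T) (v : EuclideanSpace ℝ (Fin d)) :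
    ∑ i ∈ range K, tp v (X (clamp a b (P (i + 1))) - X (clamp a b (P i))) = tp v (X b - X a) := by
  rw [← tp_sum_right, sum_range_sub (fun j => X (clamp a b (P j))), hP.zero, hP.last,
    clamp_of_le ha, clamp_of_ge hab hbT]

lemma sum_tp_sub_clamp (hP : IsPartition T K P) (X : ℝ → EuclideanSpace ℝ (Fin d))
    {a b : ℝ} (ha : 0 ≤ a) (hab : a ≤ b) (hbT : b ≤ T) (v : EuclideanSpace ℝ (Fin d)) :
    ∑ i ∈ range K, tp (X (P i) - v) (X (clamp a b (P (i + 1))) - X (clamp a b (P i)))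
      = riemannSum K X P b - riemannSum K X P a - tp v (X b - X a) := by
  simp_rw [tp_sub_left]
  rw [sum_sub_distrib, sum_tp_clamp_eq_riemannSum_sub X hab, sum_tp_const_clamp hP X ha hab hbT]

lemma mixedInt_eq (hP : IsPartition T K P) (X : ℝ → EuclideanSpace ℝ (Fin d))
    (hs : 0 ≤ s) (hsu : s ≤ u) (huT : u ≤ T) :
    mixedInt K X P s u
      = riemannSum K X P u - riemannSum K X P s - tp (pcApprox X K P s) (X u - X s) := by
  rw [← sum_tp_sub_clamp hP X hs hsu huT]
  refine sum_congr rfl fun i hi => ?_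
  have hiK : i ≤ K := (mem_range.mp hi).le
  have hks : P (lastIdx P K s) ≤ s := node_lastIdx_le (hP.zero ▸ hs)
  rcases le_or_gt (P i) s with h1 | h1
  · rcases (le_lastIdx hiK h1).lt_or_eq with hik | hik
    · rw [clamp_of_le h1, clamp_of_le ((hP.mono hik).trans hks)]
      simp
    · rw [clamp_of_le h1, pcApprox_eq, ← hik, sub_self, tp_zero_left]
  rcases le_or_gt u (P i) with h2 | h2
  · rw [clamp_of_ge hsu h2, clamp_of_ge hsu (h2.trans (hP.mono (Nat.le_succ i)))]
    simp
  · rw [clamp_of_mem h1.le h2.le, pcApprox_node hP.mono X hiK]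

lemma pcApprox_clamp (hP : IsPartition T K P) (X : ℝ → EuclideanSpace ℝ (Fin d))
    (hs : 0 ≤ s) (hsu : s ≤ u) {i : ℕ} (hiK : i ≤ K) :
    pcApprox X K P (clamp s u (P i))
      = X (clamp (P (lastIdx P K s)) (P (lastIdx P K u)) (P i)) := by
  have hks : P (lastIdx P K s) ≤ s := node_lastIdx_le (hP.zero ▸ hs)
  have hlu : P (lastIdx P K u) ≤ u := node_lastIdx_le (hP.zero ▸ hs.trans hsu)
  have hkl : P (lastIdx P K s) ≤ P (lastIdx P K u) := hP.mono (lastIdx_mono hsu)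
  rcases le_or_gt (P i) s with h1 | h1
  · rw [clamp_of_le h1, clamp_of_le (hP.mono (le_lastIdx hiK h1)), pcApprox_eq]
  rcases le_or_gt u (P i) with h2 | h2
  · rw [clamp_of_ge hsu h2, clamp_of_ge hkl (hlu.trans h2), pcApprox_eq]
  · rw [clamp_of_mem h1.le h2.le, clamp_of_mem (hks.trans h1.le) (hP.mono (le_lastIdx hiK h2.le)),
      pcApprox_node hP.mono X hiK]

lemma pcLift_pcApprox_eq (hP : IsPartition T K P) (X : ℝ → EuclideanSpace ℝ (Fin d))
    (hs : 0 ≤ s) (hsu : s ≤ u) :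
    pcLift K (pcApprox X K P) P s u
      = riemannSum K X P (P (lastIdx P K u)) - riemannSum K X P (P (lastIdx P K s))
        - tp (X (P (lastIdx P K s))) (X (P (lastIdx P K u)) - X (P (lastIdx P K s))) := by
  set k := lastIdx P K s
  set l := lastIdx P K u
  have hkl : P k ≤ P l := hP.mono (lastIdx_mono hsu)
  rw [← sum_tp_sub_clamp hP X (hP.nonneg k) hkl (hP.le_last (lastIdx_le P K u))]
  refine sum_congr rfl fun i hi => ?_
  rw [pcApprox_clamp hP X hs hsu (mem_range.mp hi).le, pcApprox_clamp hP X hs hsu (mem_range.mp hi)]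
  rcases lt_trichotomy i k with h1 | h1 | h1
  · rw [clamp_of_le (hP.mono h1.le), clamp_of_le (hP.mono h1)]
    simp
  · rw [h1, clamp_of_le le_rfl]
    simp [pcApprox_eq, k]
  rcases le_or_gt i l with h2 | h2
  · rw [clamp_of_mem (hP.mono h1.le) (hP.mono h2), pcApprox_eq]
  · rw [clamp_of_ge hkl (hP.mono h2.le), clamp_of_ge hkl (hP.mono (h2.le.trans (Nat.le_succ i)))]
    simp

lemma riemannSum_sub_riemannSum_node_lastIdx (hP : IsPartition T K P)
    (X : ℝ → EuclideanSpace ℝ (Fin d)) (hu : 0 ≤ u) (huT : u ≤ T) :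
    riemannSum K X P u - riemannSum K X P (P (lastIdx P K u))
      = tp (pcApprox X K P u) (X u - pcApprox X K P u) := by
  set l := lastIdx P K u
  have hlu : P l ≤ u := node_lastIdx_le (hP.zero ▸ hu)
  rw [← sum_tp_clamp_eq_riemannSum_sub X hlu, pcApprox_eq,
    ← sum_tp_const_clamp hP X (hP.nonneg l) hlu huT]
  refine sum_congr rfl fun i hi => ?_
  rcases lt_trichotomy i l with h1 | h1 | h1
  · rw [clamp_of_le (hP.mono h1.le), clamp_of_le (hP.mono h1)]
    simp
  · rw [h1]
  · have h2 : u < P i := lt_node_of_lastIdx_lt (mem_range.mp hi).le h1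
    rw [clamp_of_ge hlu h2.le, clamp_of_ge hlu (h2.le.trans (hP.mono (Nat.le_succ i)))]
    simp

lemma pcLift_sub_mixedInt (hP : IsPartition T K P) (X : ℝ → EuclideanSpace ℝ (Fin d))
    (hs : 0 ≤ s) (hsu : s ≤ u) (huT : u ≤ T) :
    pcLift K (pcApprox X K P) P s u - mixedInt K X P s u
      = tp (pcApprox X K P s - pcApprox X K P u) (X u - pcApprox X K P u) := by
  have hR : ∀ v, 0 ≤ v → v ≤ T → riemannSum K X P v
      = riemannSum K X P (P (lastIdx P K v)) + tp (pcApprox X K P v) (X v - pcApprox X K P v) :=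
    fun v hv hvT => by rw [← riemannSum_sub_riemannSum_node_lastIdx hP X hv hvT]; abel
  rw [pcLift_pcApprox_eq hP X hs hsu, mixedInt_eq hP X hs hsu huT, hR u (hs.trans hsu) huT,
    hR s hs (hsu.trans huT), ← pcApprox_eq X s, ← pcApprox_eq X u]
  simp only [tp_sub_left, tp_sub_right]
  abel

end Identities

section RealInequalities

variable {x y q q' : ℝ}

lemma rpow_le_rpow_sub_mul_rpow (hx : 0 ≤ x) (hxy : x ≤ y) (hq : 0 < q) (hqq' : q ≤ q') :
    x ^ q' ≤ y ^ (q' - q) * x ^ q := by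
  calc x ^ q' = x ^ (q' - q) * x ^ q := by
        rw [← Real.rpow_add' hx (by rw [sub_add_cancel]; exact (hq.trans_le hqq').ne'),
          sub_add_cancel]
    _ ≤ y ^ (q' - q) * x ^ q := by gcongr

lemma rpow_add_le_two_rpow_mul (hx : 0 ≤ x) (hy : 0 ≤ y) (hq : 0 ≤ q) :
    (x + y) ^ q ≤ 2 ^ q * (x ^ q + y ^ q) := by
  calc (x + y) ^ q ≤ (2 * max x y) ^ q := by
        gcongr; linarith [le_max_left x y, le_max_right x y]
    _ = 2 ^ q * max x y ^ q := Real.mul_rpow zero_le_two (le_max_of_le_left hx)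
    _ ≤ 2 ^ q * (x ^ q + y ^ q) := by
        gcongr
        rcases max_choice x y with h | h <;> rw [h] <;>
          linarith [Real.rpow_nonneg hx q, Real.rpow_nonneg hy q]

lemma rpow_le_one_add (hx : 0 ≤ x) (hq : 0 ≤ q) (hq1 : q ≤ 1) : x ^ q ≤ 1 + x := by
  rcases le_total x 1 with h | h
  · linarith [Real.rpow_le_one hx h hq]
  · linarith [Real.rpow_le_self_of_one_le h hq1]

end RealInequalities

namespace IsControl

variable {T : ℝ} {w : ℝ → ℝ → ℝ}

lemma mono (hw : IsControl T w) {a b a' b' : ℝ} (ha' : 0 ≤ a') (ha : a' ≤ a) (hab : a ≤ b)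
    (hb : b ≤ b') (hb' : b' ≤ T) : w a b ≤ w a' b' := by
  have h1 := hw.2 a' a b ha' ha hab (hb.trans hb')
  have h2 := hw.2 a' b b' ha' (ha.trans hab) hb hb'
  have h3 := hw.1 a' a ha' ha (hab.trans (hb.trans hb'))
  have h4 := hw.1 b b' (ha'.trans (ha.trans hab)) hb hb'
  linarith

lemma sum_le (hw : IsControl T w) {a : ℕ → ℝ} (ha : Monotone a) (ha0 : 0 ≤ a 0) {m : ℕ}
    (hm : a m ≤ T) : ∑ j ∈ range m, w (a j) (a (j + 1)) ≤ w (a 0) (a m) := by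
  induction m with
  | zero => simpa using hw.1 (a 0) (a 0) ha0 le_rfl hm
  | succ m ih =>
    have hmT : a m ≤ T := (ha (Nat.le_succ m)).trans hm
    rw [sum_range_succ]
    linarith [ih hmT, hw.2 (a 0) (a m) (a (m + 1)) ha0 (ha (Nat.zero_le m)) (ha (Nat.le_succ m)) hm]

end IsControl

def VarSumLE {E : Type*} [NormedAddCommGroup E] (A : ℝ → ℝ → E) (q T c : ℝ) : Prop :=
  ∀ (m : ℕ) (τ : ℕ → ℝ), IsPartition T m τ → ∑ j ∈ range m, ‖A (τ j) (τ (j + 1))‖ ^ q ≤ c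

namespace VarSumLE

variable {E : Type*} [NormedAddCommGroup E] {A B : ℝ → ℝ → E} {q q' T a b c ε : ℝ}

lemma epVar2_le (h : VarSumLE A q T c) (hq : 0 < q) (hc : 0 ≤ c) :
    epVar2 A q T ≤ ENNReal.ofReal (c ^ (1 / q)) := by
  rw [epVar2, ← ENNReal.ofReal_rpow_of_nonneg hc (by positivity)]
  refine ENNReal.rpow_le_rpow ?_ (by positivity)
  refine iSup_le fun m => iSup_le fun τ => iSup_le fun hmono => iSup_le fun h0 =>
    iSup_le fun hm => ?_
  rw [← ENNReal.ofReal_sum_of_nonneg fun j _ => by positivity]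
  exact ENNReal.ofReal_le_ofReal (h m τ ⟨hmono, h0, hm⟩)

lemma interpolate (h : VarSumLE A q T c) (hsup : ∀ s u, 0 ≤ s → s ≤ u → u ≤ T → ‖A s u‖ ≤ ε)
    (hq : 0 < q) (hqq' : q ≤ q') (hε : 0 ≤ ε) : VarSumLE A q' T (ε ^ (q' - q) * c) := by
  intro m τ hτ
  calc ∑ j ∈ range m, ‖A (τ j) (τ (j + 1))‖ ^ q'
      ≤ ∑ j ∈ range m, ε ^ (q' - q) * ‖A (τ j) (τ (j + 1))‖ ^ q := by
        refine sum_le_sum fun j hj => ?_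
        obtain ⟨h0, h1, h2⟩ := hτ.step (mem_range.mp hj)
        exact rpow_le_rpow_sub_mul_rpow (norm_nonneg _) (hsup _ _ h0 h1 h2) hq hqq'
    _ ≤ ε ^ (q' - q) * c := by rw [← mul_sum]; gcongr; exact h m τ hτ

lemma epVar2_le_of_interpolate (h : VarSumLE A q T c)
    (hsup : ∀ s u, 0 ≤ s → s ≤ u → u ≤ T → ‖A s u‖ ≤ ε) (hq : 0 < q) (hqq' : q ≤ q')
    (hε : 0 ≤ ε) (hc : 0 ≤ c) :
    epVar2 A q' T ≤ ENNReal.ofReal (ε ^ (1 - q / q') * c ^ (1 / q')) := by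
  have hq' : 0 < q' := hq.trans_le hqq'
  refine ((h.interpolate hsup hq hqq' hε).epVar2_le hq' (by positivity)).trans_eq ?_
  rw [Real.mul_rpow (by positivity) hc, ← Real.rpow_mul hε]
  congr 3
  field_simp

lemma sub (hA : VarSumLE A q T a) (hB : VarSumLE B q T b) (hq : 0 ≤ q) :
    VarSumLE (A - B) q T (2 ^ q * (a + b)) := by
  intro m τ hτ
  calc ∑ j ∈ range m, ‖(A - B) (τ j) (τ (j + 1))‖ ^ q
      ≤ ∑ j ∈ range m, 2 ^ q * (‖A (τ j) (τ (j + 1))‖ ^ q + ‖B (τ j) (τ (j + 1))‖ ^ q) :=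
        sum_le_sum fun j _ => (Real.rpow_le_rpow (norm_nonneg _) (norm_sub_le _ _) hq).trans
          (rpow_add_le_two_rpow_mul (norm_nonneg _) (norm_nonneg _) hq)
    _ ≤ 2 ^ q * (a + b) := by
        rw [← mul_sum, sum_add_distrib]
        gcongr
        exacts [hA m τ hτ, hB m τ hτ]

lemma of_tendsto {ι : Type*} {l : Filter ι} [l.NeBot] {F : ι → ℝ → ℝ → E}
    (hF : ∀ i, VarSumLE (F i) q T c)
    (hlim : ∀ s u, 0 ≤ s → s ≤ u → u ≤ T → Tendsto (fun i => F i s u) l (nhds (A s u)))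
    (hq : 0 ≤ q) : VarSumLE A q T c := by
  intro m τ hτ
  refine le_of_tendsto' (x := l) (tendsto_finsetSum _ fun j hj => ?_) fun i => hF i m τ hτ
  obtain ⟨h0, h1, h2⟩ := hτ.step (mem_range.mp hj)
  exact ((Real.continuous_rpow_const hq).tendsto _).comp (hlim _ _ h0 h1 h2).norm

lemma of_le_control {w : ℝ → ℝ → ℝ} (hw : IsControl T w) {φ : ℝ → ℝ} (hφ : Monotone φ)
    (hφT : ∀ s, 0 ≤ s → s ≤ T → 0 ≤ φ s ∧ φ s ≤ T)
    (h : ∀ s u, 0 ≤ s → s ≤ u → u ≤ T → ‖A s u‖ ^ q ≤ w (φ s) (φ u)) :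
    VarSumLE A q T (w 0 T) := by
  intro m τ hτ
  have hT : 0 ≤ T := hτ.last ▸ hτ.nonneg m
  have h0 := hφT (τ 0) (hτ.nonneg 0) (hτ.zero ▸ hT)
  have hm := hφT (τ m) (hτ.nonneg m) hτ.last.le
  calc ∑ j ∈ range m, ‖A (τ j) (τ (j + 1))‖ ^ q
      ≤ ∑ j ∈ range m, w (φ (τ j)) (φ (τ (j + 1))) := sum_le_sum fun j hj => by
        obtain ⟨hj0, hj1, hj2⟩ := hτ.step (mem_range.mp hj)
        exact h _ _ hj0 hj1 hj2
    _ ≤ w (φ (τ 0)) (φ (τ m)) := hw.sum_le (hφ.comp hτ.mono) h0.1 hm.2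
    _ ≤ w 0 T := hw.mono le_rfl h0.1 (hφ (hτ.mono (Nat.zero_le m))) hm.2 le_rfl

end VarSumLE

section UniformDistance

variable {ι α E : Type*} [SeminormedAddCommGroup E] {l : Filter ι} {F : ι → α → E} {f : α → E}
  {S : Set α}

lemma tendsto_iSup_norm_sub_of_tendstoUniformlyOn (h : TendstoUniformlyOn F f l S) :
    Tendsto (fun i => ⨆ x : S, ‖F i x - f x‖) l (nhds 0) := by
  rw [Metric.tendstoUniformlyOn_iff] at h
  refine tendsto_order.2 ⟨fun a ha => Eventually.of_forall fun i =>
    ha.trans_le (Real.iSup_nonneg fun _ => norm_nonneg _), fun a ha => ?_⟩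
  filter_upwards [h (a / 2) (half_pos ha)] with i hi
  refine (Real.iSup_le (fun x => ?_) (half_pos ha).le).trans_lt (half_lt_self ha)
  rw [← dist_eq_norm, dist_comm]
  exact (hi x x.2).le

lemma norm_sub_le_iSup_of_tendstoUniformlyOn [l.NeBot] (h : TendstoUniformlyOn F f l S)
    (hF : ∀ i, ∃ C, ∀ x ∈ S, ‖F i x‖ ≤ C) (i : ι) {x : α} (hx : x ∈ S) :
    ‖F i x - f x‖ ≤ ⨆ y : S, ‖F i y - f y‖ := by
  obtain ⟨j, hj⟩ := (Metric.tendstoUniformlyOn_iff.mp h 1 one_pos).exists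
  obtain ⟨Ci, hCi⟩ := hF i
  obtain ⟨Cj, hCj⟩ := hF j
  refine le_ciSup (f := fun y : S => ‖F i y - f y‖) ⟨Ci + Cj + 1, ?_⟩ ⟨x, hx⟩
  rintro _ ⟨y, rfl⟩
  have hjy : ‖F j y - f y‖ ≤ 1 := by rw [← dist_eq_norm, dist_comm]; exact (hj y y.2).le
  calc ‖F i y - f y‖ ≤ ‖F i y‖ + ‖F j y‖ + ‖F j y - f y‖ := by
        rw [← sub_add_sub_cancel (F i y) (F j y) (f y)]
        exact (norm_add_le _ _).trans (by gcongr; exact norm_sub_le _ _)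
    _ ≤ Ci + Cj + 1 := add_le_add (add_le_add (hCi y y.2) (hCj y y.2)) hjy

end UniformDistance

def simplexSup (T : ℝ) (g : ℝ → ℝ → ℝ) : ℝ :=
  ⨆ z : {z : ℝ × ℝ // 0 ≤ z.1 ∧ z.1 ≤ z.2 ∧ z.2 ≤ T}, g z.1.1 z.1.2

section SimplexSup

variable {T β : ℝ} {g : ℝ → ℝ → ℝ}

lemma le_simplexSup (hg : ∀ s u, 0 ≤ s → s ≤ u → u ≤ T → g s u ≤ β) {s u : ℝ} (hs : 0 ≤ s)
    (hsu : s ≤ u) (huT : u ≤ T) : g s u ≤ simplexSup T g :=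
  le_ciSup (f := fun z : {z : ℝ × ℝ // 0 ≤ z.1 ∧ z.1 ≤ z.2 ∧ z.2 ≤ T} => g z.1.1 z.1.2)
    ⟨β, by rintro _ ⟨z, rfl⟩; exact hg _ _ z.2.1 z.2.2.1 z.2.2.2⟩ ⟨(s, u), hs, hsu, huT⟩

lemma simplexSup_le (hT : 0 ≤ T) (hg : ∀ s u, 0 ≤ s → s ≤ u → u ≤ T → g s u ≤ β) :
    simplexSup T g ≤ β :=
  have : Nonempty {z : ℝ × ℝ // 0 ≤ z.1 ∧ z.1 ≤ z.2 ∧ z.2 ≤ T} := ⟨⟨(0, 0), le_rfl, le_rfl, hT⟩⟩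
  ciSup_le fun z => hg _ _ z.2.1 z.2.2.1 z.2.2.2

end SimplexSup

lemma tendsto_zero_and_exists_pos_le_of_le {F : ℕ → ℝ≥0∞} {a b : ℕ → ℝ} {C₀ α : ℝ}
    (hC₀ : 0 ≤ C₀) (hα : 0 < α) (ha : ∀ n, 0 ≤ a n) (hb : ∀ n, 0 ≤ b n)
    (ha0 : Tendsto a atTop (nhds 0)) (hb0 : Tendsto b atTop (nhds 0))
    (hF : ∀ n, F n ≤ ENNReal.ofReal (C₀ * (a n ^ α + b n ^ α))) :
    Tendsto F atTop (nhds 0) ∧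
      ∃ C : ℝ, 0 < C ∧ ∀ n, F n ≤ ENNReal.ofReal (C * (a n ^ α + b n ^ α)) := by
  have hrate : Tendsto (fun n => C₀ * (a n ^ α + b n ^ α)) atTop (nhds 0) := by
    simpa [Real.zero_rpow hα.ne'] using
      ((ha0.rpow_const (Or.inr hα.le)).add (hb0.rpow_const (Or.inr hα.le))).const_mul C₀
  refine ⟨tendsto_of_tendsto_of_tendsto_of_le_of_le tendsto_const_nhds
    (by simpa using ENNReal.tendsto_ofReal hrate) (fun _ => bot_le) hF, C₀ + 1, by positivity,
    fun n => (hF n).trans (ENNReal.ofReal_le_ofReal ?_)⟩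
  have := add_nonneg (Real.rpow_nonneg (ha n) α) (Real.rpow_nonneg (hb n) α)
  nlinarith

/-- `𝕏_{s,u} = ∫_s^u X_r ⊗ dX_r - X_s ⊗ X_{s,u}`, where `I u` stands for `∫_0^u X_r ⊗ dX_r`. -/
def canonicalLift {d : ℕ} (I : ℝ → EuclideanSpace ℝ (Fin d × Fin d))
    (X : ℝ → EuclideanSpace ℝ (Fin d)) (s u : ℝ) : EuclideanSpace ℝ (Fin d × Fin d) :=
  I u - I s - tp (X s) (X u - X s)

/-- The constant `C` of the rate, for `‖X‖_∞ ≤ B` and `w(0,T) = W`. -/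
def rateConst (p p' B W : ℝ) : ℝ :=
  2 * (2 ^ p * (W + W)) ^ (1 / p') + (1 + 2 * B) * (2 ^ (p / 2) * (W + W)) ^ (1 / (p' / 2))

lemma rateConst_nonneg {p p' B W : ℝ} (hB : 0 ≤ B) (hW : 0 ≤ W) : 0 ≤ rateConst p p' B W := by
  unfold rateConst
  positivity

lemma norm_le_of_rpow_le_control {E : Type*} [SeminormedAddCommGroup E] {X : ℝ → E}
    {w : ℝ → ℝ → ℝ} {p T v : ℝ} (hw : IsControl T w) (hp : 0 < p)
    (hwX : ∀ s u, 0 ≤ s → s ≤ u → u ≤ T → ‖X u - X s‖ ^ p ≤ w s u) (hv : 0 ≤ v) (hvT : v ≤ T) :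
    ‖X v‖ ≤ ‖X 0‖ + w 0 T ^ (1 / p) := by
  have hpow : ‖X v - X 0‖ ^ p ≤ w 0 T :=
    (hwX 0 v le_rfl hv hvT).trans (hw.mono le_rfl le_rfl hv hvT le_rfl)
  have hroot : ‖X v - X 0‖ ≤ w 0 T ^ (1 / p) := by
    rw [one_div, Real.le_rpow_inv_iff_of_pos (norm_nonneg _)
      (hw.1 0 T le_rfl (hv.trans hvT) le_rfl) hp]
    exact hpow
  linarith [norm_le_norm_add_norm_sub' (X v) (X 0)]

section Estimates

variable {d K : ℕ} {X : ℝ → EuclideanSpace ℝ (Fin d)} {I : ℝ → EuclideanSpace ℝ (Fin d × Fin d)}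
  {P : ℕ → ℝ} {w : ℝ → ℝ → ℝ} {T B ε ρ δ η p p' q q' s u : ℝ}

lemma norm_pcApprox_le (hP : IsPartition T K P) (hB : ∀ v, 0 ≤ v → v ≤ T → ‖X v‖ ≤ B) (s : ℝ) :
    ‖pcApprox X K P s‖ ≤ B :=
  hB _ (hP.node_lastIdx_mem s).1 (hP.node_lastIdx_mem s).2

lemma norm_riemannSum_le (hP : IsPartition T K P) (hB : ∀ v, 0 ≤ v → v ≤ T → ‖X v‖ ≤ B)
    (hu : 0 ≤ u) (huT : u ≤ T) : ‖riemannSum K X P u‖ ≤ K * (B * (B + B)) := by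
  have hB0 : 0 ≤ B := (norm_nonneg _).trans (hB u hu huT)
  have hmin : ∀ j, ‖X (min (P j) u)‖ ≤ B :=
    fun j => hB _ (le_min (hP.nonneg j) hu) ((min_le_right _ _).trans huT)
  refine (norm_sum_le _ _).trans ?_
  calc ∑ k ∈ range K, ‖tp (X (P k)) (X (min (P (k + 1)) u) - X (min (P k) u))‖
      ≤ ∑ k ∈ range K, B * (B + B) := sum_le_sum fun k hk => (norm_tp_le _ _).trans <|
        mul_le_mul (hB _ (hP.nonneg k) (hP.le_last (mem_range.mp hk).le))
          ((norm_sub_le _ _).trans (add_le_add (hmin _) (hmin _))) (norm_nonneg _) hB0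
    _ = K * (B * (B + B)) := by simp

lemma norm_mixedInt_sub_canonicalLift_le (hP : IsPartition T K P)
    (hB : ∀ v, 0 ≤ v → v ≤ T → ‖X v‖ ≤ B)
    (hε : ∀ v, 0 ≤ v → v ≤ T → ‖pcApprox X K P v - X v‖ ≤ ε)
    (hρ : ∀ v, 0 ≤ v → v ≤ T → ‖riemannSum K X P v - I v‖ ≤ ρ) :
    ∀ s u, 0 ≤ s → s ≤ u → u ≤ T →
      ‖mixedInt K X P s u - canonicalLift I X s u‖ ≤ 2 * ρ + 2 * B * ε := by
  intro s u hs hsu huT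
  have hu : 0 ≤ u := hs.trans hsu
  have hsT : s ≤ T := hsu.trans huT
  have hdecomp : mixedInt K X P s u - canonicalLift I X s u
      = (riemannSum K X P u - I u) - (riemannSum K X P s - I s)
        - tp (pcApprox X K P s - X s) (X u - X s) := by
    rw [mixedInt_eq hP X hs hsu huT, canonicalLift, tp_sub_left]
    abel
  have htp : ‖tp (pcApprox X K P s - X s) (X u - X s)‖ ≤ ε * (B + B) :=
    (norm_tp_le _ _).trans <| mul_le_mul (hε s hs hsT)
      ((norm_sub_le _ _).trans (add_le_add (hB u hu huT) (hB s hs hsT))) (norm_nonneg _)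
      ((norm_nonneg _).trans (hε s hs hsT))
  rw [hdecomp]
  refine (norm_sub_le _ _).trans ((add_le_add ((norm_sub_le _ _).trans
    (add_le_add (hρ u hu huT) (hρ s hs hsT))) htp).trans_eq ?_)
  ring

lemma norm_pcLift_sub_canonicalLift_le (hP : IsPartition T K P)
    (hB : ∀ v, 0 ≤ v → v ≤ T → ‖X v‖ ≤ B)
    (hε : ∀ v, 0 ≤ v → v ≤ T → ‖pcApprox X K P v - X v‖ ≤ ε)
    (hδ : ‖mixedInt K X P s u - canonicalLift I X s u‖ ≤ δ)
    (hs : 0 ≤ s) (hsu : s ≤ u) (huT : u ≤ T) :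
    ‖pcLift K (pcApprox X K P) P s u - canonicalLift I X s u‖ ≤ 2 * B * ε + δ := by
  have hB0 : 0 ≤ B := (norm_nonneg _).trans (hB s hs (hsu.trans huT))
  rw [← sub_add_sub_cancel _ (mixedInt K X P s u), pcLift_sub_mixedInt hP X hs hsu huT]
  refine (norm_add_le _ _).trans (add_le_add ((norm_tp_le _ _).trans ?_) hδ)
  calc ‖pcApprox X K P s - pcApprox X K P u‖ * ‖X u - pcApprox X K P u‖ ≤ (B + B) * ε := by
        refine mul_le_mul ((norm_sub_le _ _).trans (add_le_add (norm_pcApprox_le hP hB s)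
          (norm_pcApprox_le hP hB u))) ?_ (norm_nonneg _) (by positivity)
        rw [norm_sub_rev]
        exact hε u (hs.trans hsu) huT
    _ = 2 * B * ε := by ring

lemma norm_pcLift_rpow_le (hP : IsPartition T K P) (hw : IsControl T w)
    (hR : ∀ k l : ℕ, k < l → l ≤ K →
      ‖riemannSum K X P (P l) - riemannSum K X P (P k) - tp (X (P k)) (X (P l) - X (P k))‖ ^ q
        ≤ w (P k) (P l))
    (hq : 0 < q) (hs : 0 ≤ s) (hsu : s ≤ u) :
    ‖pcLift K (pcApprox X K P) P s u‖ ^ q ≤ w (P (lastIdx P K s)) (P (lastIdx P K u)) := by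
  rw [pcLift_pcApprox_eq hP X hs hsu]
  rcases (lastIdx_mono (P := P) (K := K) hsu).lt_or_eq with hkl | hkl
  · exact hR _ _ hkl (lastIdx_le P K u)
  · rw [hkl, sub_self, sub_self, tp_zero_right, sub_zero, norm_zero, Real.zero_rpow hq.ne']
    exact hw.1 _ _ (hP.nonneg _) le_rfl (hP.le_last (lastIdx_le P K u))

lemma varSumLE_increment (hw : IsControl T w)
    (hwX : ∀ s u, 0 ≤ s → s ≤ u → u ≤ T → ‖X u - X s‖ ^ p ≤ w s u) :
    VarSumLE (fun s u => X u - X s) p T (w 0 T) :=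
  VarSumLE.of_le_control hw monotone_id (fun _ hs hsT => ⟨hs, hsT⟩) hwX

lemma varSumLE_pcApprox_increment (hP : IsPartition T K P) (hw : IsControl T w)
    (hwX : ∀ s u, 0 ≤ s → s ≤ u → u ≤ T → ‖X u - X s‖ ^ p ≤ w s u) :
    VarSumLE (fun s u => pcApprox X K P u - pcApprox X K P s) p T (w 0 T) :=
  VarSumLE.of_le_control hw (φ := fun s => P (lastIdx P K s)) (hP.mono.comp lastIdx_mono)
    (fun s _ _ => hP.node_lastIdx_mem s) fun s u _ hsu _ =>
      hwX _ _ (hP.node_lastIdx_mem s).1 (hP.mono (lastIdx_mono hsu)) (hP.node_lastIdx_mem u).2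

lemma varSumLE_pcLift (hP : IsPartition T K P) (hw : IsControl T w)
    (hR : ∀ k l : ℕ, k < l → l ≤ K →
      ‖riemannSum K X P (P l) - riemannSum K X P (P k) - tp (X (P k)) (X (P l) - X (P k))‖ ^ q
        ≤ w (P k) (P l))
    (hq : 0 < q) : VarSumLE (pcLift K (pcApprox X K P) P) q T (w 0 T) :=
  VarSumLE.of_le_control hw (φ := fun s => P (lastIdx P K s)) (hP.mono.comp lastIdx_mono)
    (fun s _ _ => hP.node_lastIdx_mem s) fun _ _ hs hsu _ => norm_pcLift_rpow_le hP hw hR hq hs hsu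

lemma epVar_pcApprox_sub_le (hP : IsPartition T K P) (hw : IsControl T w)
    (hwX : ∀ s u, 0 ≤ s → s ≤ u → u ≤ T → ‖X u - X s‖ ^ p ≤ w s u) (hp : 0 < p) (hpp' : p ≤ p')
    (hε : ∀ v, 0 ≤ v → v ≤ T → ‖pcApprox X K P v - X v‖ ≤ ε) (hε0 : 0 ≤ ε) :
    epVar (fun v => pcApprox X K P v - X v) p' T
      ≤ ENNReal.ofReal ((2 * ε) ^ (1 - p / p') * (2 ^ p * (w 0 T + w 0 T)) ^ (1 / p')) := by
  have hw0 : 0 ≤ w 0 T := hw.1 0 T le_rfl (hP.last ▸ hP.nonneg K) le_rfl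
  have hdiff : (fun s u => (pcApprox X K P u - X u) - (pcApprox X K P s - X s))
      = (fun s u => pcApprox X K P u - pcApprox X K P s) - fun s u => X u - X s := by
    funext s u
    simp only [Pi.sub_apply]
    abel
  change epVar2 (fun s u => (pcApprox X K P u - X u) - (pcApprox X K P s - X s)) p' T ≤ _
  rw [hdiff]
  refine ((varSumLE_pcApprox_increment hP hw hwX).sub (varSumLE_increment hw hwX)
    hp.le).epVar2_le_of_interpolate (fun s u hs hsu huT => ?_) hp hpp' (by positivity)
    (by positivity)
  rw [← hdiff, two_mul]
  exact (norm_sub_le _ _).trans (add_le_add (hε u (hs.trans hsu) huT) (hε s hs (hsu.trans huT)))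

lemma epVar2_pcLift_sub_le (hP : IsPartition T K P) (hw : IsControl T w)
    (hR : ∀ k l : ℕ, k < l → l ≤ K →
      ‖riemannSum K X P (P l) - riemannSum K X P (P k) - tp (X (P k)) (X (P l) - X (P k))‖ ^ q
        ≤ w (P k) (P l))
    (hlift : VarSumLE (canonicalLift I X) q T (w 0 T)) (hq : 0 < q) (hqq' : q ≤ q')
    (hη : ∀ s u, 0 ≤ s → s ≤ u → u ≤ T →
      ‖pcLift K (pcApprox X K P) P s u - canonicalLift I X s u‖ ≤ η) (hη0 : 0 ≤ η) :
    epVar2 (fun s u => pcLift K (pcApprox X K P) P s u - canonicalLift I X s u) q' T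
      ≤ ENNReal.ofReal (η ^ (1 - q / q') * (2 ^ q * (w 0 T + w 0 T)) ^ (1 / q')) :=
  have hw0 : 0 ≤ w 0 T := hw.1 0 T le_rfl (hP.last ▸ hP.nonneg K) le_rfl
  ((varSumLE_pcLift hP hw hR hq).sub hlift hq.le).epVar2_le_of_interpolate hη hq hqq' hη0
    (by positivity)

end Estimates

section Convergence

variable {d : ℕ} {X : ℝ → EuclideanSpace ℝ (Fin d)} {I : ℝ → EuclideanSpace ℝ (Fin d × Fin d)}
  {w : ℝ → ℝ → ℝ} {T B ε δ p p' : ℝ}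

lemma epVar_add_epVar2_le_rateConst {K : ℕ} {P : ℕ → ℝ} (hP : IsPartition T K P)
    (hw : IsControl T w) (hwX : ∀ s u, 0 ≤ s → s ≤ u → u ≤ T → ‖X u - X s‖ ^ p ≤ w s u)
    (hR : ∀ k l : ℕ, k < l → l ≤ K →
      ‖riemannSum K X P (P l) - riemannSum K X P (P k) - tp (X (P k)) (X (P l) - X (P k))‖
        ^ (p / 2) ≤ w (P k) (P l))
    (hlift : VarSumLE (canonicalLift I X) (p / 2) T (w 0 T)) (hp : 0 < p) (hpp' : p ≤ p')
    (hB : ∀ v, 0 ≤ v → v ≤ T → ‖X v‖ ≤ B)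
    (hε : ∀ v, 0 ≤ v → v ≤ T → ‖pcApprox X K P v - X v‖ ≤ ε)
    (hδ : ∀ s u, 0 ≤ s → s ≤ u → u ≤ T → ‖mixedInt K X P s u - canonicalLift I X s u‖ ≤ δ)
    (hε0 : 0 ≤ ε) (hδ0 : 0 ≤ δ) :
    epVar (fun v => pcApprox X K P v - X v) p' T +
        epVar2 (fun s u => pcLift K (pcApprox X K P) P s u - canonicalLift I X s u) (p' / 2) T
      ≤ ENNReal.ofReal (rateConst p p' B (w 0 T) * (ε ^ (1 - p / p') + δ ^ (1 - p / p'))) := by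
  have hT : 0 ≤ T := hP.last ▸ hP.nonneg K
  have hB0 : 0 ≤ B := (norm_nonneg _).trans (hB 0 le_rfl hT)
  have hw0 : 0 ≤ w 0 T := hw.1 0 T le_rfl hT le_rfl
  have hα0 : 0 ≤ 1 - p / p' := sub_nonneg.2 ((div_le_one (hp.trans_le hpp')).2 hpp')
  have hα1 : 1 - p / p' ≤ 1 := sub_le_self _ (div_nonneg hp.le (hp.le.trans hpp'))
  have hlevel2 := epVar2_pcLift_sub_le hP hw hR hlift (half_pos hp)
    (div_le_div_of_nonneg_right hpp' zero_le_two)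
    (fun s u hs hsu huT => norm_pcLift_sub_canonicalLift_le hP hB hε (hδ s u hs hsu huT) hs hsu huT)
    (by positivity)
  rw [div_div_div_cancel_right₀ two_ne_zero] at hlevel2
  refine (add_le_add (epVar_pcApprox_sub_le hP hw hwX hp hpp' hε hε0) hlevel2).trans ?_
  rw [← ENNReal.ofReal_add (by positivity) (by positivity), rateConst]
  refine ENNReal.ofReal_le_ofReal ?_
  set α := 1 - p / p'
  set a := (2 ^ p * (w 0 T + w 0 T)) ^ (1 / p')
  set b := (2 ^ (p / 2) * (w 0 T + w 0 T)) ^ (1 / (p' / 2))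
  have hlevel1_rate : (2 * ε) ^ α ≤ 2 * ε ^ α := by
    rw [Real.mul_rpow zero_le_two hε0]
    gcongr
    exact (Real.rpow_le_rpow_of_exponent_le one_le_two hα1).trans_eq (Real.rpow_one 2)
  have hlevel2_rate : (2 * B * ε + δ) ^ α ≤ (1 + 2 * B) * ε ^ α + δ ^ α := by
    refine (Real.rpow_add_le_add_rpow (by positivity) hδ0 hα0 hα1).trans ?_
    rw [Real.mul_rpow (by positivity) hε0]
    gcongr
    exact rpow_le_one_add (by positivity) hα0 hα1
  have hab : 0 ≤ (2 * a + 2 * B * b) * δ ^ α := by positivity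
  calc (2 * ε) ^ α * a + (2 * B * ε + δ) ^ α * b
      ≤ 2 * ε ^ α * a + ((1 + 2 * B) * ε ^ α + δ ^ α) * b := by gcongr
    _ ≤ (2 * a + (1 + 2 * B) * b) * (ε ^ α + δ ^ α) := by linarith

lemma varSumLE_canonicalLift {q : ℝ} {N : ℕ → ℕ} {t : ℕ → ℕ → ℝ}
    (hP : ∀ n, IsPartition T (N n) (t n)) (hw : IsControl T w)
    (hR : ∀ n, ∀ k l : ℕ, k < l → l ≤ N n →
      ‖riemannSum (N n) X (t n) (t n l) - riemannSum (N n) X (t n) (t n k) -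
          tp (X (t n k)) (X (t n l) - X (t n k))‖ ^ q ≤ w (t n k) (t n l))
    (hq : 0 < q) {η : ℕ → ℝ}
    (hη : ∀ n s u, 0 ≤ s → s ≤ u → u ≤ T →
      ‖pcLift (N n) (pcApprox X (N n) (t n)) (t n) s u - canonicalLift I X s u‖ ≤ η n)
    (hη0 : Tendsto η atTop (nhds 0)) :
    VarSumLE (canonicalLift I X) q T (w 0 T) :=
  VarSumLE.of_tendsto (l := atTop) (fun n => varSumLE_pcLift (hP n) hw (hR n) hq)
    (fun s u hs hsu huT => tendsto_iff_norm_sub_tendsto_zero.2 <|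
      squeeze_zero (fun _ => norm_nonneg _) (fun n => hη n s u hs hsu huT) hη0) hq.le

end Convergence

theorem discretized_rough_path_convergence_general (d : ℕ) (p p' T : ℝ)
    (hp2 : 2 < p) (hpp' : p < p')
    (X : ℝ → EuclideanSpace ℝ (Fin d)) (N : ℕ → ℕ) (t : ℕ → ℕ → ℝ)
    (hmono : ∀ n, Monotone (t n)) (h0 : ∀ n, t n 0 = 0) (htop : ∀ n, t n (N n) = T)
    (hunif : TendstoUniformlyOn (fun n s => pcApprox X (N n) (t n) s) X atTop (Set.Icc 0 T))
    (I : ℝ → EuclideanSpace ℝ (Fin d × Fin d))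
    (hI : TendstoUniformlyOn (fun n u => riemannSum (N n) X (t n) u) I atTop (Set.Icc 0 T))
    (w : ℝ → ℝ → ℝ) (hw : IsControl T w)
    (hwX : ∀ s u, 0 ≤ s → s ≤ u → u ≤ T → ‖X u - X s‖ ^ p ≤ w s u)
    (hwR : ∀ n, ∀ k ℓ : ℕ, k < ℓ → ℓ ≤ N n →
      ‖riemannSum (N n) X (t n) (t n ℓ) - riemannSum (N n) X (t n) (t n k) -
          tp (X (t n k)) (X (t n ℓ) - X (t n k))‖ ^ (p / 2) ≤ w (t n k) (t n ℓ)) :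
    Tendsto (fun n =>
        epVar (fun u => pcApprox X (N n) (t n) u - X u) p' T +
        epVar2 (fun s u => pcLift (N n) (pcApprox X (N n) (t n)) (t n) s u -
            (I u - I s - tp (X s) (X u - X s))) (p' / 2) T) atTop (nhds 0) ∧
    ∃ C : ℝ, 0 < C ∧ ∀ n,
      epVar (fun u => pcApprox X (N n) (t n) u - X u) p' T +
      epVar2 (fun s u => pcLift (N n) (pcApprox X (N n) (t n)) (t n) s u -
          (I u - I s - tp (X s) (X u - X s))) (p' / 2) T ≤
      ENNReal.ofReal (C * (
        (⨆ u : Set.Icc (0 : ℝ) T, ‖pcApprox X (N n) (t n) u.1 - X u.1‖) ^ (1 - p / p') +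
        (⨆ z : {z : ℝ × ℝ // 0 ≤ z.1 ∧ z.1 ≤ z.2 ∧ z.2 ≤ T},
          ‖mixedInt (N n) X (t n) z.1.1 z.1.2 -
            (I z.1.2 - I z.1.1 - tp (X z.1.1) (X z.1.2 - X z.1.1))‖) ^ (1 - p / p'))) := by
  have hp : 0 < p := by linarith
  have hP n : IsPartition T (N n) (t n) := ⟨hmono n, h0 n, htop n⟩
  have hT : 0 ≤ T := (hP 0).last ▸ (hP 0).nonneg _
  set B := ‖X 0‖ + w 0 T ^ (1 / p)
  have hB : ∀ v, 0 ≤ v → v ≤ T → ‖X v‖ ≤ B := fun _ => norm_le_of_rpow_le_control hw hp hwX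
  have hε n v (hv : 0 ≤ v) (hvT : v ≤ T) := norm_sub_le_iSup_of_tendstoUniformlyOn hunif
    (fun n => ⟨B, fun s _ => norm_pcApprox_le (hP n) hB s⟩) n (Set.mem_Icc.2 ⟨hv, hvT⟩)
  have hρ n v (hv : 0 ≤ v) (hvT : v ≤ T) := norm_sub_le_iSup_of_tendstoUniformlyOn hI
    (fun n => ⟨_, fun s hs => norm_riemannSum_le (hP n) hB hs.1 hs.2⟩) n (Set.mem_Icc.2 ⟨hv, hvT⟩)
  have hmixed n := norm_mixedInt_sub_canonicalLift_le (I := I) (hP n) hB (hε n) (hρ n)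
  have hε0 := tendsto_iSup_norm_sub_of_tendstoUniformlyOn hunif
  have hδ0 : Tendsto (fun n => simplexSup T fun s u =>
      ‖mixedInt (N n) X (t n) s u - canonicalLift I X s u‖) atTop (nhds 0) :=
    squeeze_zero (fun _ => Real.iSup_nonneg fun _ => norm_nonneg _)
      (fun n => simplexSup_le hT (hmixed n)) <| by
      simpa using ((tendsto_iSup_norm_sub_of_tendstoUniformlyOn hI).const_mul 2).add
        (hε0.const_mul (2 * B))
  have hlift := varSumLE_canonicalLift hP hw hwR (half_pos hp) (fun n s u hs hsu huT =>
    norm_pcLift_sub_canonicalLift_le (hP n) hB (hε n) (le_simplexSup (hmixed n) hs hsu huT) hs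
      hsu huT) <| by simpa using (hε0.const_mul (2 * B)).add hδ0
  exact tendsto_zero_and_exists_pos_le_of_le
    (rateConst_nonneg ((norm_nonneg _).trans (hB 0 le_rfl hT)) (hw.1 0 T le_rfl hT le_rfl))
    (sub_pos.2 ((div_lt_one (hp.trans hpp')).2 hpp'))
    (fun _ => Real.iSup_nonneg fun _ => norm_nonneg _)
    (fun _ => Real.iSup_nonneg fun _ => norm_nonneg _) hε0 hδ0 fun n =>
      epVar_add_epVar2_le_rateConst (hP n) hw hwX (hwR n) hlift hp hpp'.le hB (hε n)
        (fun _ _ => le_simplexSup (hmixed n)) (Real.iSup_nonneg fun _ => norm_nonneg _)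
        (Real.iSup_nonneg fun _ => norm_nonneg _)

/-- convergence of the discretized rough paths to the canonical rough path
lift under Property (RIE), with quantitative rate. -/
theorem discretized_rough_path_convergence (d : ℕ) (p p' T : ℝ)
    (hp2 : 2 < p) (hp3 : p < 3) (hpp' : p < p') (hT : 0 < T)
    (X : ℝ → EuclideanSpace ℝ (Fin d)) (N : ℕ → ℕ) (t : ℕ → ℕ → ℝ)
    (hmono : ∀ n, Monotone (t n)) (h0 : ∀ n, t n 0 = 0) (htop : ∀ n, t n (N n) = T)
    (hmesh : ∀ ε > 0, ∃ m, ∀ n ≥ m, ∀ i < N n, t n (i + 1) - t n i < ε)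
    (hunif : TendstoUniformlyOn (fun n s => pcApprox X (N n) (t n) s) X atTop (Set.Icc 0 T))
    (I : ℝ → EuclideanSpace ℝ (Fin d × Fin d))
    (hI : TendstoUniformlyOn (fun n u => riemannSum (N n) X (t n) u) I atTop (Set.Icc 0 T))
    (w : ℝ → ℝ → ℝ) (hw : IsControl T w)
    (hwX : ∀ s u, 0 ≤ s → s ≤ u → u ≤ T → ‖X u - X s‖ ^ p ≤ w s u)
    (hwR : ∀ n, ∀ k ℓ : ℕ, k < ℓ → ℓ ≤ N n →
      ‖riemannSum (N n) X (t n) (t n ℓ) - riemannSum (N n) X (t n) (t n k) -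
          tp (X (t n k)) (X (t n ℓ) - X (t n k))‖ ^ (p / 2) ≤ w (t n k) (t n ℓ)) :
    Tendsto (fun n =>
        epVar (fun u => pcApprox X (N n) (t n) u - X u) p' T +
        epVar2 (fun s u => pcLift (N n) (pcApprox X (N n) (t n)) (t n) s u -
            (I u - I s - tp (X s) (X u - X s))) (p' / 2) T) atTop (nhds 0) ∧
    ∃ C : ℝ, 0 < C ∧ ∀ n,
      epVar (fun u => pcApprox X (N n) (t n) u - X u) p' T +
      epVar2 (fun s u => pcLift (N n) (pcApprox X (N n) (t n)) (t n) s u -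
          (I u - I s - tp (X s) (X u - X s))) (p' / 2) T ≤
      ENNReal.ofReal (C * (
        (⨆ u : Set.Icc (0 : ℝ) T, ‖pcApprox X (N n) (t n) u.1 - X u.1‖) ^ (1 - p / p') +
        (⨆ z : {z : ℝ × ℝ // 0 ≤ z.1 ∧ z.1 ≤ z.2 ∧ z.2 ≤ T},
          ‖mixedInt (N n) X (t n) z.1.1 z.1.2 -
            (I z.1.2 - I z.1.1 - tp (X z.1.1) (X z.1.2 - X z.1.1))‖) ^ (1 - p / p'))) :=
  discretized_rough_path_convergence_general d p p' T hp2 hpp' X N t hmono h0 htop hunif I hI w hw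
    hwX hwR
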